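/- (Sufficiency in the model with additive fixed effects and common thresholds.) Fix β ∈ ℝ^k, covariate vectors x₁₁, x₁₂, x₂₁, x₂₂ ∈ ℝ^k, sender effects α₁, α₂ ∈ ℝ, receiver effects γ₁, γ₂ ∈ ℝ, a function λ : {1,…,M} → ℝ of common thresholds, and cutoffs m₁₁, m₁₂, m₂₁, m₂₂ ∈ {1,…,M}. Let D₁₁, D₁₂, D₂₁, D₂₂ be mutually independent random variables valued in {0,1} with P(D_{rs} = 1) = Λ(⟨x_{rs}, β⟩ + α_r + γ_s − λ(m_{rs})) for r,s ∈ {1,2}. Set Z = ((D₁₁ − D₁₂) − (D₂₁ − D₂₂))/2, r = (x₁₁ − x₁₂) − (x₂₁ − x₂₂), and λ₀(m) = (λ(m₁₁) − λ(m₁₂)) − (λ(m₂₁) − λ(m₂₂)). Then P(Z = 1 | Z ∈ {−1, +1}) = Λ(⟨r, β⟩ − λ₀(m)); in particular this conditional probability does not depend on α₁, α₂, γ₁, γ₂. -/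

import Mathlib

/-!
Conditioning on `Z = ±1` leaves exactly two outcomes of the tetrad, `(1,0,0,1)` and `(0,1,1,0)`.
By independence their probabilities are products of logistic terms, and since
`Λ(z) / (1 - Λ(z)) = e^z` the ratio of the two products is `exp` of the alternating sum of the
linear indices. In that sum the sender effects `α` and receiver effects `γ` cancel, leaving
`⟪r, β⟫ - lam₀`.
-/

open MeasureTheory ProbabilityTheory
open scoped RealInnerProductSpace

/-- The standard logistic CDF `Λ(z) = e^z / (1 + e^z)`. -/
noncomputable def logistic (z : ℝ) : ℝ := Real.exp z / (1 + Real.exp z)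

lemma logistic_pos (z : ℝ) : 0 < logistic z := by
  unfold logistic; positivity

lemma logistic_lt_one (z : ℝ) : logistic z < 1 := by
  unfold logistic
  rw [div_lt_one (by positivity)]
  linarith

lemma one_sub_logistic (z : ℝ) : 1 - logistic z = 1 / (1 + Real.exp z) := by
  unfold logistic
  field_simp
  ring

lemma logistic_sub_add_eq_div (a b c d : ℝ) :
    logistic (a - b - c + d) = Real.exp (a + d) / (Real.exp (a + d) + Real.exp (b + c)) := by
  rw [logistic, show a - b - c + d = (a + d) - (b + c) by ring, Real.exp_sub]
  field_simp
  ring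

lemma logistic_tetrad_ratio (a b c d : ℝ) :
    logistic a * (1 - logistic b) * ((1 - logistic c) * logistic d) /
      (logistic a * (1 - logistic b) * ((1 - logistic c) * logistic d) +
        (1 - logistic a) * logistic b * (logistic c * (1 - logistic d)))
      = logistic (a - b - c + d) := by
  rw [logistic_sub_add_eq_div]
  simp only [one_sub_logistic]
  simp only [logistic, Real.exp_add]
  field_simp

lemma tetrad_eq_one_iff {a b c d : ℝ} (ha : a = 0 ∨ a = 1) (hb : b = 0 ∨ b = 1)
    (hc : c = 0 ∨ c = 1) (hd : d = 0 ∨ d = 1) :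
    ((a - b) - (c - d)) / 2 = 1 ↔ a = 1 ∧ b = 0 ∧ c = 0 ∧ d = 1 := by
  rcases ha with rfl | rfl <;> rcases hb with rfl | rfl <;> rcases hc with rfl | rfl <;>
    rcases hd with rfl | rfl <;> norm_num

lemma tetrad_eq_neg_one_iff {a b c d : ℝ} (ha : a = 0 ∨ a = 1) (hb : b = 0 ∨ b = 1)
    (hc : c = 0 ∨ c = 1) (hd : d = 0 ∨ d = 1) :
    ((a - b) - (c - d)) / 2 = -1 ↔ a = 0 ∧ b = 1 ∧ c = 1 ∧ d = 0 := by
  rcases ha with rfl | rfl <;> rcases hb with rfl | rfl <;> rcases hc with rfl | rfl <;>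
    rcases hd with rfl | rfl <;> norm_num

section Probability

variable {Ω : Type*} [MeasurableSpace Ω]

lemma measure_eq_zero_eq_ofReal_one_sub (P : Measure Ω) [IsProbabilityMeasure P]
    {X : Ω → ℝ} (hX : Measurable X) (hval : ∀ ω, X ω = 0 ∨ X ω = 1) {p : ℝ} (hp : 0 ≤ p)
    (hP : P {ω | X ω = 1} = ENNReal.ofReal p) :
    P {ω | X ω = 0} = ENNReal.ofReal (1 - p) := by
  have hcompl : {ω | X ω = 0} = {ω | X ω = 1}ᶜ := by
    ext ω
    rcases hval ω with h | h <;> simp [h]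
  rw [hcompl, measure_compl (measurableSet_eq_fun hX measurable_const) (measure_ne_top _ _), hP,
    measure_univ, ENNReal.ofReal_sub _ hp, ENNReal.ofReal_one]

lemma ProbabilityTheory.iIndepFun.measure_tetrad_eq {E : Type*} [MeasurableSpace E]
    [MeasurableSingletonClass E] {P : Measure Ω} {D : Fin 2 → Fin 2 → Ω → E}
    (hindep : iIndepFun (fun q : Fin 2 × Fin 2 => D q.1 q.2) P) (a b c d : E) :
    P {ω | D 0 0 ω = a ∧ D 0 1 ω = b ∧ D 1 0 ω = c ∧ D 1 1 ω = d}
      = P {ω | D 0 0 ω = a} * P {ω | D 0 1 ω = b} *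
          (P {ω | D 1 0 ω = c} * P {ω | D 1 1 ω = d}) := by
  let v : Fin 2 → Fin 2 → E := ![![a, b], ![c, d]]
  have hset : {ω | D 0 0 ω = a ∧ D 0 1 ω = b ∧ D 1 0 ω = c ∧ D 1 1 ω = d}
      = ⋂ q : Fin 2 × Fin 2, D q.1 q.2 ⁻¹' {v q.1 q.2} := by
    ext ω
    simp [v, Prod.forall, Fin.forall_fin_two, and_assoc]
  rw [hset, hindep.meas_iInter fun q => ⟨{v q.1 q.2}, measurableSet_singleton _, rfl⟩,
    Fintype.prod_prod_type]
  simp only [v, Fin.prod_univ_two, Matrix.cons_val_zero, Matrix.cons_val_one, Set.preimage,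
    Set.mem_singleton_iff]

lemma cond_union_apply_left_of_disjoint (P : Measure Ω) {s t : Set Ω} (hs : MeasurableSet s)
    (ht : MeasurableSet t) (hst : Disjoint s t) {a b : ℝ} (ha : 0 < a) (hb : 0 ≤ b)
    (hPs : P s = ENNReal.ofReal a) (hPt : P t = ENNReal.ofReal b) :
    P[|s ∪ t] s = ENNReal.ofReal (a / (a + b)) := by
  rw [cond_apply (hs.union ht), Set.inter_eq_self_of_subset_right Set.subset_union_left,
    measure_union hst ht, hPs, hPt, ← ENNReal.ofReal_add ha.le hb,
    ← ENNReal.ofReal_inv_of_pos (by positivity), ← ENNReal.ofReal_mul (by positivity),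
    inv_mul_eq_div]

end Probability

theorem sufficiency_additive_effects_common_thresholds_general
    {Ω : Type*} [MeasurableSpace Ω] (P : Measure Ω) [IsProbabilityMeasure P]
    (k M : ℕ)
    (β : EuclideanSpace ℝ (Fin k))
    (x : Fin 2 → Fin 2 → EuclideanSpace ℝ (Fin k))
    (α : Fin 2 → ℝ) (γ : Fin 2 → ℝ)
    (lam : Fin M → ℝ) (m : Fin 2 → Fin 2 → Fin M)
    (D : Fin 2 → Fin 2 → Ω → ℝ)
    (hmeas : ∀ r s, Measurable (D r s))
    (hval : ∀ r s ω, D r s ω = 0 ∨ D r s ω = 1)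
    (hindep : iIndepFun
      (fun p : Fin 2 × Fin 2 => D p.1 p.2) P)
    (hprob : ∀ r s, P {ω | D r s ω = 1}
      = ENNReal.ofReal (logistic (⟪x r s, β⟫ + α r + γ s - lam (m r s))))
    (Z : Ω → ℝ)
    (hZ : ∀ ω, Z ω = ((D 0 0 ω - D 0 1 ω) - (D 1 0 ω - D 1 1 ω)) / 2)
    (r : EuclideanSpace ℝ (Fin k))
    (hr : r = (x 0 0 - x 0 1) - (x 1 0 - x 1 1))
    (lam₀ : ℝ)
    (hlam₀ : lam₀ = (lam (m 0 0) - lam (m 0 1)) - (lam (m 1 0) - lam (m 1 1))) :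
    P[|{ω | Z ω = 1 ∨ Z ω = -1}] {ω | Z ω = 1}
      = ENNReal.ofReal (logistic (⟪r, β⟫ - lam₀)) := by
  set t : Fin 2 → Fin 2 → ℝ := fun i j => ⟪x i j, β⟫ + α i + γ j - lam (m i j)
  set p : Fin 2 → Fin 2 → ℝ := fun i j => logistic (t i j)
  have hp : ∀ i j, P {ω | D i j ω = 1} = ENNReal.ofReal (p i j) := hprob
  have hpos : ∀ i j, 0 < p i j := fun i j => logistic_pos _
  have hp0 : ∀ i j, P {ω | D i j ω = 0} = ENNReal.ofReal (1 - p i j) := fun i j =>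
    measure_eq_zero_eq_ofReal_one_sub P (hmeas i j) (hval i j) (hpos i j).le (hp i j)
  have hp1 : ∀ i j, 0 < 1 - p i j := fun i j => sub_pos.2 (logistic_lt_one _)
  have hZm : Measurable Z := by
    rw [funext hZ]
    fun_prop
  have hPplus : P {ω | Z ω = 1}
      = ENNReal.ofReal (p 0 0 * (1 - p 0 1) * ((1 - p 1 0) * p 1 1)) := by
    simp only [hZ, tetrad_eq_one_iff (hval 0 0 _) (hval 0 1 _) (hval 1 0 _) (hval 1 1 _)]
    rw [hindep.measure_tetrad_eq, hp, hp, hp0, hp0]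
    simp only [← ENNReal.ofReal_mul, (hpos _ _).le, (hp1 _ _).le, mul_nonneg]
  have hPminus : P {ω | Z ω = -1}
      = ENNReal.ofReal ((1 - p 0 0) * p 0 1 * (p 1 0 * (1 - p 1 1))) := by
    simp only [hZ, tetrad_eq_neg_one_iff (hval 0 0 _) (hval 0 1 _) (hval 1 0 _) (hval 1 1 _)]
    rw [hindep.measure_tetrad_eq, hp, hp, hp0, hp0]
    simp only [← ENNReal.ofReal_mul, (hpos _ _).le, (hp1 _ _).le, mul_nonneg]
  have hdisj : Disjoint {ω | Z ω = 1} {ω | Z ω = -1} :=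
    Set.disjoint_left.2 fun ω h1 h2 => by norm_num [show Z ω = 1 from h1] at h2
  rw [Set.ofPred_or, cond_union_apply_left_of_disjoint P (measurableSet_eq_fun hZm measurable_const)
    (measurableSet_eq_fun hZm measurable_const) hdisj (by simp only [mul_pos, hpos, hp1])
    (by simp only [mul_nonneg, (hpos _ _).le, (hp1 _ _).le])
    hPplus hPminus, logistic_tetrad_ratio]
  congr 2
  rw [hr, hlam₀]
  simp only [t, inner_sub_left]
  ring

/-- Sufficiency in the ordered-logit network model with additive fixed effects
`α` (sender), `γ` (receiver) and common thresholds `lam`, with a vector of four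
potentially different cutoffs `m`. -/
theorem sufficiency_additive_effects_common_thresholds
    {Ω : Type*} [MeasurableSpace Ω] (P : Measure Ω) [IsProbabilityMeasure P]
    (k M : ℕ) (hM : 1 ≤ M)
    (β : EuclideanSpace ℝ (Fin k))
    (x : Fin 2 → Fin 2 → EuclideanSpace ℝ (Fin k))
    (α : Fin 2 → ℝ) (γ : Fin 2 → ℝ)
    (lam : Fin M → ℝ) (m : Fin 2 → Fin 2 → Fin M)
    (D : Fin 2 → Fin 2 → Ω → ℝ)
    (hmeas : ∀ r s, Measurable (D r s))
    (hval : ∀ r s ω, D r s ω = 0 ∨ D r s ω = 1)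
    (hindep : iIndepFun
      (fun p : Fin 2 × Fin 2 => D p.1 p.2) P)
    (hprob : ∀ r s, P {ω | D r s ω = 1}
      = ENNReal.ofReal (logistic (⟪x r s, β⟫ + α r + γ s - lam (m r s))))
    (Z : Ω → ℝ)
    (hZ : ∀ ω, Z ω = ((D 0 0 ω - D 0 1 ω) - (D 1 0 ω - D 1 1 ω)) / 2)
    (r : EuclideanSpace ℝ (Fin k))
    (hr : r = (x 0 0 - x 0 1) - (x 1 0 - x 1 1))
    (lam₀ : ℝ)
    (hlam₀ : lam₀ = (lam (m 0 0) - lam (m 0 1)) - (lam (m 1 0) - lam (m 1 1))) :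
    P[|{ω | Z ω = 1 ∨ Z ω = -1}] {ω | Z ω = 1}
      = ENNReal.ofReal (logistic (⟪r, β⟫ - lam₀)) :=
  sufficiency_additive_effects_common_thresholds_general P k M β x α γ lam m D hmeas hval hindep
    hprob Z hZ r hr lam₀ hlam₀
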